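/- Let R be a noetherian commutative ring with Krull dimension at least 1. Then Ω(R) = ℕ; that is, every proper ideal I of R satisfies ω_R(I) < ∞, and for every positive integer k there exists a proper ideal I of R with ω_R(I) = k. -/

import Mathlib

/-- A proper ideal `I` is `n`-absorbing if whenever a product of `n + 1` elements
lies in `I`, the product of some `n` of them (in increasing index order) lies in `I`. -/
def IsNAbsorbing {R : Type*} [CommRing R] (n : ℕ) (I : Ideal R) : Prop :=
  ∀ x : Fin (n + 1) → R, (∏ i, x i) ∈ I →
    ∃ ι : Fin n → Fin (n + 1), StrictMono ι ∧ (∏ j, x (ι j)) ∈ I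

/-- `omegaR I` is the smallest positive integer `n` such that `I` is `n`-absorbing,
and `∞` if no such `n` exists. -/
noncomputable def omegaR {R : Type*} [CommRing R] (I : Ideal R) : ℕ∞ :=
  sInf {w : ℕ∞ | ∃ n : ℕ, 0 < n ∧ w = (n : ℕ∞) ∧ IsNAbsorbing n I}

/-- `Ω(R)` is the set of `ω`-values of proper ideals of `R`. -/
noncomputable def OmegaSet (R : Type*) [CommRing R] : Set ℕ∞ :=
  {w | ∃ I : Ideal R, I ≠ ⊤ ∧ omegaR I = w}

/-!
Upper bound: by Lasker–Noether a proper ideal is a finite intersection of primary ideals `Q`,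
and `(√Q)^n ≤ Q` for some `n`. If a finite product lies in `Q`, the factors outside `√Q` can be
dropped because `Q` is primary, and `n` of the remaining factors already multiply into `Q`; so
`Q` absorbs arbitrary finite products with `n` factors, and such bounds add up under
intersection.

Lower bound: take primes `P < Q` and a maximal ideal `M ⊇ Q`. If every `a ∈ M` had
`a^k ∈ M^(k+1)` for some `k`, then, `M` being finitely generated, `M^n = M^(n+1)` for some `n`,
and Nakayama gives `r ≡ 1 mod M` with `r • M^n = 0`, forcing `M^n ≤ P` and `M ≤ P`. So some
`a ∈ M` has `a^k ∉ M^(k+1)` for all `k`. The `M`-primary ideal `M^(k+1)` is `(k+1)`-absorbing,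
but for `n ≤ k` the factorization `a^(k+1) = a^(k+1-n) · a ⋯ a` into `n + 1` factors shows it
is not `n`-absorbing: every `n` of these factors multiply to a divisor of `a^k`.
-/

section

open Finset

variable {R : Type*} [CommRing R]

theorem Fin.exists_eq_succAbove_of_strictMono {n : ℕ} {ι : Fin n → Fin (n + 1)}
    (hι : StrictMono ι) : ∃ i : Fin (n + 1), ι = i.succAbove := by
  obtain ⟨i, hi⟩ : ∃ i, i ∉ Set.range ι := by
    by_contra! h
    simpa using Fintype.card_le_of_surjective ι h
  have hcard : ({i}ᶜ : Finset (Fin (n + 1))).card = n := by simp [card_compl]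
  refine ⟨i, ?_⟩
  rw [orderEmbOfFin_unique hcard (fun j => by simpa using fun h => hi ⟨j, h⟩) hι,
    orderEmbOfFin_compl_singleton_eq_succAboveOrderEmb]
  rfl

theorem isNAbsorbing_iff_succAbove {n : ℕ} {I : Ideal R} :
    IsNAbsorbing n I ↔
      ∀ x : Fin (n + 1) → R, ∏ i, x i ∈ I →
        ∃ i : Fin (n + 1), ∏ j, x (i.succAbove j) ∈ I := by
  refine forall_congr' fun x => imp_congr_right fun _ => ⟨?_, ?_⟩
  · rintro ⟨ι, hι, hx⟩
    obtain ⟨i, rfl⟩ := Fin.exists_eq_succAbove_of_strictMono hι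
    exact ⟨i, hx⟩
  · rintro ⟨i, hx⟩
    exact ⟨i.succAbove, Fin.strictMono_succAbove i, hx⟩

theorem not_isNAbsorbing_of_pow_mem {I : Ideal R} {a : R} {n k : ℕ} (hnk : n ≤ k)
    (hI : a ^ (k + 1) ∈ I) (ha : a ^ k ∉ I) : ¬ IsNAbsorbing n I := by
  rw [isNAbsorbing_iff_succAbove]
  intro h
  let d : Fin (n + 1) → ℕ := Fin.cons (k + 1 - n) fun _ => 1
  have hd : ∀ i, 1 ≤ d i := Fin.cases (by simp only [Fin.cons_zero, d]; omega) (by simp [d])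
  have hsum : ∑ i, d i = k + 1 := by
    simp only [d, Fin.sum_cons, sum_const, card_univ, Fintype.card_fin, smul_eq_mul, mul_one]
    omega
  obtain ⟨i, hi⟩ := h (fun i => a ^ d i) (by rwa [prod_pow_eq_pow_sum, hsum])
  rw [prod_pow_eq_pow_sum] at hi
  have hle : ∑ j, d (i.succAbove j) ≤ k := by
    have := Fin.sum_univ_succAbove d i
    have := hd i
    omega
  apply ha
  rw [← Nat.add_sub_cancel' hle, pow_add]
  exact I.mul_mem_right _ hi

def AbsorbsFiniteProducts (n : ℕ) (I : Ideal R) : Prop :=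
  ∀ ⦃ι : Type⦄ (s : Finset ι) (x : ι → R),
    ∏ i ∈ s, x i ∈ I → ∃ t ⊆ s, #t ≤ n ∧ ∏ i ∈ t, x i ∈ I

theorem absorbsFiniteProducts_top : AbsorbsFiniteProducts 0 (⊤ : Ideal R) :=
  fun _ _ _ _ => ⟨∅, empty_subset _, by simp, Submodule.mem_top⟩

namespace AbsorbsFiniteProducts

variable {m n : ℕ} {I J : Ideal R}

theorem isNAbsorbing (h : AbsorbsFiniteProducts m I) (hmn : m ≤ n) : IsNAbsorbing n I := by
  classical
  rw [isNAbsorbing_iff_succAbove]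
  intro x hx
  obtain ⟨t, -, ht, htI⟩ := h univ x hx
  obtain ⟨i, hi⟩ : ∃ i, i ∉ t := by
    by_contra! h
    simpa using (card_le_card (fun a _ => h a : univ ⊆ t)).trans (ht.trans hmn)
  have hti : t ⊆ {i}ᶜ := fun a ha => mem_compl.2 fun hai => hi (mem_singleton.1 hai ▸ ha)
  refine ⟨i, ?_⟩
  rw [← prod_image fun a _ b _ h => Fin.succAbove_right_injective h, Fin.image_succAbove_univ,
    ← prod_sdiff hti]
  exact I.mul_mem_left _ htI

theorem inf (hI : AbsorbsFiniteProducts m I) (hJ : AbsorbsFiniteProducts n J) :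
    AbsorbsFiniteProducts (m + n) (I ⊓ J) := by
  classical
  intro ι s x hx
  obtain ⟨t, hts, ht, htI⟩ := hI s x hx.1
  obtain ⟨u, hus, hu, huJ⟩ := hJ s x hx.2
  refine ⟨t ∪ u, union_subset hts hus, (card_union_le t u).trans (by omega), ?_, ?_⟩
  · rw [← prod_sdiff subset_union_left]
    exact I.mul_mem_left _ htI
  · rw [← prod_sdiff subset_union_right]
    exact J.mul_mem_left _ huJ

end AbsorbsFiniteProducts

theorem Ideal.IsPrimary.absorbsFiniteProducts {Q : Ideal R} {n : ℕ} (hQ : Q.IsPrimary)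
    (hn : Q.radical ^ n ≤ Q) : AbsorbsFiniteProducts n Q := by
  classical
  intro ι s x hx
  set t := s.filter fun i => x i ∈ Q.radical
  have htQ : ∏ i ∈ t, x i ∈ Q := by
    rw [← prod_filter_mul_prod_filter_not s fun i => x i ∈ Q.radical] at hx
    refine ((Ideal.isPrimary_iff.1 hQ).2 hx).resolve_right ?_
    have := Ideal.isPrime_radical hQ
    rw [Ideal.IsPrime.prod_mem_iff]
    simp
  by_cases ht : #t ≤ n
  · exact ⟨t, filter_subset _ _, ht, htQ⟩
  · obtain ⟨u, hut, hu⟩ := exists_subset_card_eq (not_le.1 ht).le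
    refine ⟨u, hut.trans (filter_subset _ _), hu.le, hn ?_⟩
    rw [← hu, ← prod_const]
    exact Ideal.prod_mem_prod fun i hi => (mem_filter.1 (hut hi)).2

theorem exists_absorbsFiniteProducts [IsNoetherianRing R] (I : Ideal R) :
    ∃ n, AbsorbsFiniteProducts n I := by
  classical
  obtain ⟨s, rfl, hs⟩ := Submodule.isLasker R R I
  induction s using Finset.induction_on with
  | empty => exact ⟨0, absorbsFiniteProducts_top⟩
  | insert Q s _ ih =>
    obtain ⟨m, hm⟩ := ih fun J hJ => hs (mem_insert_of_mem hJ)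
    obtain ⟨n, hn⟩ := Ideal.exists_radical_pow_le_of_fg Q (IsNoetherian.noetherian _)
    rw [inf_insert]
    exact ⟨n + m, (Ideal.IsPrimary.absorbsFiniteProducts (hs (mem_insert_self Q s)) hn).inf hm⟩

theorem omegaR_le {I : Ideal R} {n : ℕ} (hn : 0 < n) (h : IsNAbsorbing n I) : omegaR I ≤ n :=
  sInf_le ⟨n, hn, rfl, h⟩

theorem exists_omegaR_eq {I : Ideal R} {n : ℕ} (hn : 0 < n) (h : IsNAbsorbing n I) :
    ∃ k : ℕ, 0 < k ∧ omegaR I = k := by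
  obtain ⟨k, hk, hkI, -⟩ :=
    csInf_mem (s := {w : ℕ∞ | ∃ n : ℕ, 0 < n ∧ w = n ∧ IsNAbsorbing n I}) ⟨n, n, hn, rfl, h⟩
  exact ⟨k, hk, hkI⟩

theorem Ideal.pow_le_pow_succ_of_le {J M : Ideal R} {m i : ℕ} (hJM : J ≤ M)
    (hm : J ^ m ≤ M ^ (m + 1)) (hmi : m ≤ i) : J ^ i ≤ M ^ (i + 1) := by
  obtain ⟨j, rfl⟩ := Nat.exists_eq_add_of_le hmi
  calc J ^ (m + j) = J ^ m * J ^ j := pow_add J m j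
    _ ≤ M ^ (m + 1) * M ^ j := Ideal.mul_mono hm (Ideal.pow_right_mono hJM j)
    _ = M ^ (m + j + 1) := by ring

theorem Ideal.exists_pow_le_pow_succ_of_fg {I M : Ideal R} (hI : I.FG) (hIM : I ≤ M)
    (h : ∀ x ∈ I, ∃ n, x ^ n ∈ M ^ (n + 1)) : ∃ n, I ^ n ≤ M ^ (n + 1) := by
  induction I, hI using Submodule.fg_induction with
  | singleton x =>
    obtain ⟨n, hn⟩ := h x (Ideal.mem_span_singleton_self x)
    exact ⟨n, by rwa [← Ideal.span, Ideal.span_singleton_pow, Ideal.span_le,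
      Set.singleton_subset_iff]⟩
  | sup J K _ _ hJ hK =>
    have hJM : J ≤ M := le_sup_left.trans hIM
    have hKM : K ≤ M := le_sup_right.trans hIM
    obtain ⟨m, hm⟩ := hJ hJM fun x hx => h x (Submodule.mem_sup_left hx)
    obtain ⟨n, hn⟩ := hK hKM fun x hx => h x (Submodule.mem_sup_right hx)
    refine ⟨m + n, ?_⟩
    rw [← Ideal.add_eq_sup, add_pow, Ideal.sum_eq_sup, Finset.sup_le_iff]
    intro i hi
    have hi : i ≤ m + n := Nat.lt_succ_iff.1 (mem_range.1 hi)
    refine Ideal.mul_le_left.trans ?_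
    rcases le_or_gt m i with hmi | him
    · calc J ^ i * K ^ (m + n - i) ≤ M ^ (i + 1) * M ^ (m + n - i) :=
            Ideal.mul_mono (Ideal.pow_le_pow_succ_of_le hJM hm hmi)
              (Ideal.pow_right_mono hKM _)
        _ = M ^ (m + n + 1) := by rw [← pow_add]; congr 1; omega
    · calc J ^ i * K ^ (m + n - i) ≤ M ^ i * M ^ (m + n - i + 1) :=
            Ideal.mul_mono (Ideal.pow_right_mono hJM _)
              (Ideal.pow_le_pow_succ_of_le hKM hn (by omega))
        _ = M ^ (m + n + 1) := by rw [← pow_add]; congr 1; omega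

theorem exists_forall_pow_notMem_pow_succ [IsNoetherianRing R] {P M : Ideal R} [P.IsPrime]
    (hM : M ≠ ⊤) (hPM : P < M) : ∃ a ∈ M, ∀ n, a ^ n ∉ M ^ (n + 1) := by
  by_contra! h
  obtain ⟨n, hn⟩ := Ideal.exists_pow_le_pow_succ_of_fg (IsNoetherian.noetherian M) le_rfl h
  obtain ⟨r, hr, hrM⟩ := Submodule.exists_sub_one_mem_and_smul_eq_zero_of_fg_of_le_smul M
    (M ^ n) (IsNoetherian.noetherian _) (by rwa [smul_eq_mul, ← pow_succ'])
  have hrP : r ∉ P := fun hrP =>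
    hM ((Ideal.eq_top_iff_one M).2 (by simpa using M.sub_mem (hPM.le hrP) hr))
  have hMP : M ^ n ≤ P := fun y hy => by
    have hry : r * y ∈ P := by rw [← smul_eq_mul, hrM y hy]; exact P.zero_mem
    exact (Ideal.IsPrime.mem_or_mem ‹_› hry).resolve_left hrP
  exact hPM.not_ge (Ideal.IsPrime.le_of_pow_le hMP)

theorem omegaR_pow_succ_of_isMaximal {M : Ideal R} (hM : M.IsMaximal) {a : R} (ha : a ∈ M)
    {k : ℕ} (hak : a ^ k ∉ M ^ (k + 1)) : omegaR (M ^ (k + 1)) = (k + 1 : ℕ) := by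
  have hrad : (M ^ (k + 1)).radical = M := by
    rw [Ideal.radical_pow (I := M) k.succ_ne_zero, hM.isPrime.radical]
  have hprim : (M ^ (k + 1)).IsPrimary := Ideal.isPrimary_of_isMaximal_radical (by rwa [hrad])
  refine le_antisymm (omegaR_le k.succ_pos
    ((hprim.absorbsFiniteProducts (by rw [hrad])).isNAbsorbing le_rfl)) (le_sInf ?_)
  rintro _ ⟨n, -, rfl, hn⟩
  by_contra! hlt
  exact not_isNAbsorbing_of_pow_mem (Nat.lt_succ_iff.1 (by exact_mod_cast hlt))
    (Ideal.pow_mem_pow ha _) hak hn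

end

/-- For a noetherian ring of Krull dimension at least `1`, `Ω(R) = ℕ`: every proper
ideal has finite `ω`-value and every positive integer is attained. -/
theorem omegaSet_noetherian {R : Type*} [CommRing R] [IsNoetherianRing R]
    (hdim : 1 ≤ ringKrullDim R) :
    OmegaSet R = {w : ℕ∞ | ∃ k : ℕ, 0 < k ∧ w = (k : ℕ∞)} ∧
    (∀ I : Ideal R, I ≠ ⊤ → omegaR I ≠ ⊤) ∧
    (∀ k : ℕ, 0 < k → ∃ I : Ideal R, I ≠ ⊤ ∧ omegaR I = (k : ℕ∞)) := by
  have hfinite (I : Ideal R) : ∃ k : ℕ, 0 < k ∧ omegaR I = k := by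
    obtain ⟨n, hn⟩ := exists_absorbsFiniteProducts I
    exact exists_omegaR_eq n.succ_pos (hn.isNAbsorbing n.le_succ)
  have hattained (k : ℕ) (hk : 0 < k) : ∃ I : Ideal R, I ≠ ⊤ ∧ omegaR I = k := by
    obtain ⟨P, Q, hPQ⟩ := (Order.one_le_krullDim_iff (α := PrimeSpectrum R)).1 hdim
    obtain ⟨M, hM, hQM⟩ := Ideal.exists_le_maximal Q.asIdeal Q.isPrime.ne_top
    obtain ⟨a, ha, hpow⟩ := exists_forall_pow_notMem_pow_succ (P := P.asIdeal) hM.ne_top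
      (lt_of_lt_of_le ((PrimeSpectrum.asIdeal_lt_asIdeal P Q).2 hPQ) hQM)
    obtain ⟨k, rfl⟩ := Nat.exists_eq_add_of_lt hk
    exact ⟨M ^ (k + 1), ne_top_of_le_ne_top hM.ne_top (Ideal.pow_le_self k.succ_ne_zero),
      by simpa using omegaR_pow_succ_of_isMaximal hM ha (hpow k)⟩
  refine ⟨Set.ext fun w => ⟨?_, ?_⟩, fun I _ => ?_, hattained⟩
  · rintro ⟨I, -, rfl⟩
    exact hfinite I
  · rintro ⟨k, hk, rfl⟩
    exact hattained k hk
  · obtain ⟨k, -, hk⟩ := hfinite I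
    exact hk ▸ ENat.natCast_ne_top k
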